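/- arXiv:1912.08305 — 3 statements merged into one kernel-verified Lean document; each statement's English description precedes it below -/
import Mathlib

section
/- Define x_M(r) = x₀ + (1/φ₂)[rB·ln(rB/((δ−r)z₀)) + (δ−B)(rB/(δ−r) − z₀)] for r in an interval where rB/(δ−r) > z₀, with constants x₀ ≥ 0, φ₂, B, z₀ > 0 and δ > max(B, r). Then x_M is strictly increasing in r. -/
/-! With `u(r) = rB/(δ−r)`, which increases on `r < δ`, the peak load is
`x₀ + (1/φ₂)[rB·log(u/z₀) + (δ−B)(u − z₀)]`. On the region `u > z₀` the logarithm is positive,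
so `rB·log(u/z₀)` is a product of positive increasing factors, and `δ > B` makes the second
summand increasing as well; no differentiation is needed. -/

open Real Set

lemma strictMonoOn_mul_div_sub {B δ : ℝ} (hB : 0 < B) (hδ : 0 < δ) :
    StrictMonoOn (fun r : ℝ => r * B / (δ - r)) (Iio δ) := by
  intro r hr s hs hrs
  rw [div_lt_div_iff₀ (sub_pos.2 hr) (sub_pos.2 hs)]
  nlinarith [mul_pos (sub_pos.2 hrs) (mul_pos hB hδ)]

theorem peak_viral_load_strict_mono_general
    (x₀ z₀ φ₂ B δ : ℝ)
    (hz₀ : 0 < z₀) (hφ₂ : 0 < φ₂) (hB : 0 < B) (hδB : B < δ) :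
    StrictMonoOn
      (fun r : ℝ => x₀ + (1/φ₂) *
        (r * B * Real.log (r * B / ((δ - r) * z₀))
          + (δ - B) * (r * B / (δ - r) - z₀)))
      {r : ℝ | 0 < r ∧ r < δ ∧ z₀ < r * B / (δ - r)} := by
  rintro r ⟨hr, hrδ, hzr⟩ s ⟨-, hsδ, -⟩ hrs
  have hu : r * B / (δ - r) < s * B / (δ - s) :=
    strictMonoOn_mul_div_sub hB (hB.trans hδB) hrδ hsδ hrs
  have hlog_nonneg : 0 ≤ log (r * B / ((δ - r) * z₀)) := by
    rw [← div_div]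
    exact log_nonneg ((one_le_div hz₀).2 hzr.le)
  have hlog : log (r * B / ((δ - r) * z₀)) < log (s * B / ((δ - s) * z₀)) := by
    simp only [← div_div]
    exact log_lt_log (div_pos (hz₀.trans hzr) hz₀) (div_lt_div_of_pos_right hu hz₀)
  have hprod : r * B * log (r * B / ((δ - r) * z₀)) < s * B * log (s * B / ((δ - s) * z₀)) :=
    mul_lt_mul'' (mul_lt_mul_of_pos_right hrs hB) hlog (by positivity) hlog_nonneg
  have hlin : (δ - B) * (r * B / (δ - r) - z₀) < (δ - B) * (s * B / (δ - s) - z₀) :=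
    mul_lt_mul_of_pos_left (sub_lt_sub_right hu z₀) (sub_pos.2 hδB)
  exact add_lt_add_right (mul_lt_mul_of_pos_left (add_lt_add hprod hlin) (one_div_pos.2 hφ₂)) x₀

/-- The explicit peak viral load
`x_M(r) = x₀ + (1/φ₂)[rB·ln(rB/((δ−r)z₀)) + (δ−B)(rB/(δ−r) − z₀)]`
is strictly increasing in `r` on the interval where `rB/(δ−r) > z₀`, provided
`δ > B` and `δ > r`. -/
theorem peak_viral_load_strict_mono
    (x₀ z₀ φ₂ B δ : ℝ)
    (hx₀ : 0 ≤ x₀) (hz₀ : 0 < z₀) (hφ₂ : 0 < φ₂) (hB : 0 < B) (hδB : B < δ) :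
    StrictMonoOn
      (fun r : ℝ => x₀ + (1/φ₂) *
        (r * B * Real.log (r * B / ((δ - r) * z₀))
          + (δ - B) * (r * B / (δ - r) - z₀)))
      {r : ℝ | 0 < r ∧ r < δ ∧ z₀ < r * B / (δ - r)} :=
  peak_viral_load_strict_mono_general x₀ z₀ φ₂ B δ hz₀ hφ₂ hB hδB
end

section
/- Let G(x) = μ_v/(N_v − x) for x ∈ [0, N_v) and F(x) = ∫₀^∞ (Λ(y₀)β(y₀)𝓕(y₀))/(β(y₀)x + μ) dy₀, where Λ, β, 𝓕 are nonnegative integrable/bounded functions, μ, μ_v, N_v > 0, and F(0) < ∞. Then G is strictly increasing with G(x) → ∞ as x → N_v⁻, F is nonincreasing, and the equation F(x) = G(x) has a solution x ∈ (0, N_v) if and only if F(0) > G(0), i.e., if and only if R₀ := (N_v/(μμ_v))∫₀^∞ Λ(y₀)β(y₀)𝓕(y₀)dy₀ > 1. -/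
/-!
`G(x) = μ_v/(N_v - x)` increases strictly from `G(0) = μ_v/N_v` to `+∞` on `[0, N_v)`, while
`F` is continuous and nonincreasing there, each integrand `Λβ𝓕/(βx + μ)` being dominated by
`Λβ𝓕/μ`. Hence `F - G` is strictly decreasing, so it has a zero in `(0, N_v)` exactly when it is
positive at `0`, by the intermediate value theorem; and `F(0) = (∫Λβ𝓕)/μ > μ_v/N_v` is `R₀ > 1`.
-/

open MeasureTheory Filter Set Topology

lemma strictMonoOn_div_sub {a : ℝ} (N : ℝ) (ha : 0 < a) :
    StrictMonoOn (fun x => a / (N - x)) (Iio N) :=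
  fun _ _ _ hy hxy => div_lt_div_of_pos_left ha (sub_pos.2 hy) (by linarith)

lemma tendsto_div_sub_nhdsLT {a : ℝ} (N : ℝ) (ha : 0 < a) :
    Tendsto (fun x => a / (N - x)) (𝓝[<] N) atTop := by
  have hsub : Tendsto (fun x => N - x) (𝓝[<] N) (𝓝[>] 0) := by
    refine tendsto_nhdsWithin_of_tendsto_nhds_of_eventually_within _ ?_
      (eventually_nhdsWithin_of_forall fun _ hx => mem_Ioi.2 (sub_pos.2 hx))
    have h : Tendsto (fun x => N - x) (𝓝 N) (𝓝 (N - N)) := tendsto_const_nhds.sub tendsto_id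
    simpa using h.mono_left nhdsWithin_le_nhds
  simp only [div_eq_mul_inv]
  exact (tendsto_inv_nhdsGT_zero.comp hsub).const_mul_atTop ha

theorem exists_eq_div_sub_iff {F : ℝ → ℝ} {a N : ℝ} (ha : 0 < a) (hN : 0 < N)
    (hanti : AntitoneOn F (Ico 0 N)) (hcont : ContinuousOn F (Ico 0 N)) :
    (∃ x ∈ Ioo 0 N, F x = a / (N - x)) ↔ a / N < F 0 := by
  have h0 : (0 : ℝ) ∈ Ico 0 N := ⟨le_rfl, hN⟩
  constructor
  · rintro ⟨x, hx, hFx⟩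
    calc a / N = a / (N - 0) := by rw [sub_zero]
      _ < a / (N - x) := strictMonoOn_div_sub N ha hN hx.2 hx.1
      _ = F x := hFx.symm
      _ ≤ F 0 := hanti h0 (Ioo_subset_Ico_self hx) hx.1.le
  · intro hF0
    obtain ⟨c, hF0_lt, hcN, hc0⟩ : ∃ c, F 0 < a / (N - c) ∧ c < N ∧ 0 < c :=
      ((tendsto_div_sub_nhdsLT N ha).eventually_gt_atTop (F 0) |>.and
        (eventually_mem_nhdsWithin.and
          (eventually_nhdsWithin_of_eventually_nhds (eventually_gt_nhds hN)))).exists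
    have hIcc : Icc 0 c ⊆ Ico 0 N := Icc_subset_Ico_right hcN
    have hG : ContinuousOn (fun x => a / (N - x)) (Icc 0 c) :=
      continuousOn_const.div (continuous_const.sub continuous_id).continuousOn
        fun x hx => (sub_pos.2 (hIcc hx).2).ne'
    have hFc_le : F c ≤ F 0 := hanti h0 (hIcc ⟨hc0.le, le_rfl⟩) hc0.le
    obtain ⟨x, hx, hroot⟩ := intermediate_value_Ioo' hc0.le ((hcont.mono hIcc).sub hG)
      (show (0 : ℝ) ∈ Ioo (F c - a / (N - c)) (F 0 - a / (N - 0)) from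
        ⟨by linarith, by rw [sub_zero]; linarith⟩)
    exact ⟨x, ⟨hx.1, hx.2.trans hcN⟩, sub_eq_zero.1 hroot⟩

lemma norm_div_mul_add_le {p q x c : ℝ} (hp : 0 ≤ p) (hq : 0 ≤ q) (hx : 0 ≤ x) (hc : 0 < c) :
    ‖p / (q * x + c)‖ ≤ p / c := by
  have hqx : 0 ≤ q * x := mul_nonneg hq hx
  rw [Real.norm_of_nonneg (div_nonneg hp (by linarith))]
  exact div_le_div_of_nonneg_left hp hc (le_add_of_nonneg_left hqx)

section IntegralDivMulAdd

variable {α : Type*} [MeasurableSpace α] {ν : Measure α} {f b : α → ℝ} {c : ℝ}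

lemma aestronglyMeasurable_div_mul_add (hfi : Integrable f ν) (hbm : Measurable b) (x : ℝ) :
    AEStronglyMeasurable (fun y => f y / (b y * x + c)) ν :=
  hfi.aestronglyMeasurable.div₀ ((hbm.mul_const x).add_const c).aestronglyMeasurable

variable (hf : ∀ y, 0 ≤ f y) (hb : ∀ y, 0 ≤ b y) (hfi : Integrable f ν) (hbm : Measurable b)
  (hc : 0 < c)
include hf hb hfi hbm hc

lemma integrable_div_mul_add {x : ℝ} (hx : 0 ≤ x) :
    Integrable (fun y => f y / (b y * x + c)) ν :=
  (hfi.div_const c).mono' (aestronglyMeasurable_div_mul_add hfi hbm x)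
    (ae_of_all _ fun y => norm_div_mul_add_le (hf y) (hb y) hx hc)

lemma antitoneOn_integral_div_mul_add :
    AntitoneOn (fun x => ∫ y, f y / (b y * x + c) ∂ν) (Ici 0) := by
  intro x hx x' hx' hxx'
  refine integral_mono (integrable_div_mul_add hf hb hfi hbm hc hx')
    (integrable_div_mul_add hf hb hfi hbm hc hx) fun y => ?_
  have hden : 0 < b y * x + c := by have := mul_nonneg (hb y) hx; linarith
  exact div_le_div_of_nonneg_left (hf y) hden (by nlinarith [hb y])

lemma continuousOn_integral_div_mul_add :
    ContinuousOn (fun x => ∫ y, f y / (b y * x + c) ∂ν) (Ici 0) := by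
  refine continuousOn_of_dominated (bound := fun y => f y / c)
    (fun x _ => aestronglyMeasurable_div_mul_add hfi hbm x)
    (fun x hx => ae_of_all _ fun y => norm_div_mul_add_le (hf y) (hb y) hx hc)
    (hfi.div_const c) (ae_of_all _ fun y => ?_)
  exact continuousOn_const.div
    ((continuous_const.mul continuous_id).add continuous_const).continuousOn
      fun x hx => by have := mul_nonneg (hb y) (mem_Ici.1 hx); linarith

end IntegralDivMulAdd

theorem endemic_equilibrium_existence_general
    (μ μv Nv : ℝ) (hμ : 0 < μ) (hμv : 0 < μv) (hNv : 0 < Nv)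
    (Λ β 𝓕 : ℝ → ℝ)
    (hΛ : ∀ y, 0 ≤ Λ y) (hβ : ∀ y, 0 ≤ β y) (h𝓕 : ∀ y, 0 ≤ 𝓕 y)
    (hmeasβ : Measurable β)
    (hint : IntegrableOn (fun y₀ => Λ y₀ * β y₀ * 𝓕 y₀) (Set.Ioi 0)) :
    StrictMonoOn (fun x => μv / (Nv - x)) (Set.Ico 0 Nv) ∧
    Filter.Tendsto (fun x => μv / (Nv - x)) (nhdsWithin Nv (Set.Iio Nv))
      Filter.atTop ∧
    AntitoneOn (fun x => ∫ y₀ in Set.Ioi (0:ℝ),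
      Λ y₀ * β y₀ * 𝓕 y₀ / (β y₀ * x + μ)) (Set.Ici 0) ∧
    ((∃ x ∈ Set.Ioo 0 Nv,
        (∫ y₀ in Set.Ioi (0:ℝ), Λ y₀ * β y₀ * 𝓕 y₀ / (β y₀ * x + μ))
          = μv / (Nv - x)) ↔
      1 < (Nv / (μ * μv)) * ∫ y₀ in Set.Ioi (0:ℝ), Λ y₀ * β y₀ * 𝓕 y₀) := by
  have hnum : ∀ y, 0 ≤ Λ y * β y * 𝓕 y := fun y => mul_nonneg (mul_nonneg (hΛ y) (hβ y)) (h𝓕 y)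
  have hanti := antitoneOn_integral_div_mul_add hnum hβ hint hmeasβ hμ
  have hcont := continuousOn_integral_div_mul_add hnum hβ hint hmeasβ hμ
  refine ⟨(strictMonoOn_div_sub Nv hμv).mono Ico_subset_Iio_self, tendsto_div_sub_nhdsLT Nv hμv,
    hanti, ?_⟩
  rw [exists_eq_div_sub_iff hμv hNv (hanti.mono Ico_subset_Ici_self)
    (hcont.mono Ico_subset_Ici_self)]
  simp only [mul_zero, zero_add, integral_div]
  rw [div_lt_div_iff₀ hNv hμ, div_mul_eq_mul_div, one_lt_div (mul_pos hμ hμv)]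
  constructor <;> intro h <;> linarith

/-- Existence of the single-strain endemic equilibrium: with
`G(x) = μ_v/(N_v − x)` and
`F(x) = ∫ Λβ𝓕/(βx+μ)`, the equation `F(x) = G(x)` has a solution in `(0, N_v)`
iff `R₀ = (N_v/(μμ_v))∫Λβ𝓕 > 1`; moreover `G` is strictly increasing and blows up at
`N_v⁻`, and `F` is nonincreasing. -/
theorem endemic_equilibrium_existence
    (μ μv Nv : ℝ) (hμ : 0 < μ) (hμv : 0 < μv) (hNv : 0 < Nv)
    (Λ β 𝓕 : ℝ → ℝ)
    (hΛ : ∀ y, 0 ≤ Λ y) (hβ : ∀ y, 0 ≤ β y) (h𝓕 : ∀ y, 0 ≤ 𝓕 y)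
    (hβbdd : ∃ M, ∀ y, β y ≤ M)
    (hmeas : Measurable Λ) (hmeasβ : Measurable β) (hmeas𝓕 : Measurable 𝓕)
    (hint : IntegrableOn (fun y₀ => Λ y₀ * β y₀ * 𝓕 y₀) (Set.Ioi 0)) :
    StrictMonoOn (fun x => μv / (Nv - x)) (Set.Ico 0 Nv) ∧
    Filter.Tendsto (fun x => μv / (Nv - x)) (nhdsWithin Nv (Set.Iio Nv))
      Filter.atTop ∧
    AntitoneOn (fun x => ∫ y₀ in Set.Ioi (0:ℝ),
      Λ y₀ * β y₀ * 𝓕 y₀ / (β y₀ * x + μ)) (Set.Ici 0) ∧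
    ((∃ x ∈ Set.Ioo 0 Nv,
        (∫ y₀ in Set.Ioi (0:ℝ), Λ y₀ * β y₀ * 𝓕 y₀ / (β y₀ * x + μ))
          = μv / (Nv - x)) ↔
      1 < (Nv / (μ * μv)) * ∫ y₀ in Set.Ioi (0:ℝ), Λ y₀ * β y₀ * 𝓕 y₀) :=
  endemic_equilibrium_existence_general μ μv Nv hμ hμv hNv Λ β 𝓕 hΛ hβ h𝓕 hmeasβ hint
end

section
/- Let G, H, μ, μ_v, Λ_v, β_v > 0 and define the quadratic Q(x) = 2μ_v(G+H+μ_v)x² + [μ_vμ(3μ_v+2G) − Λ_vβ_v(G+H)]x + (μ_vμ)²(1 − R₀). If H ≤ G, Λ_vβ_v < 2μ_vμ, and R₀ ≤ 1, then Q has no positive root; if R₀ > 1, then Q has exactly one positive root. -/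
/-!
With `R₀ = Λ_vβ_vG/(μμ_v²)`, the constant term `(μ_vμ)²(1 - R₀)` has the sign of `1 - R₀` and the
leading coefficient is positive. If `R₀ ≤ 1`, then `Λ_vβ_v(G + H) ≤ 2Λ_vβ_vG ≤ 2μμ_v²` makes the
linear coefficient positive too, so `Q > 0` on `(0, ∞)`. If `R₀ > 1`, the roots have negative
product, so exactly one of them is positive.
-/

lemma existsUnique_pos_root_of_const_neg {a b c : ℝ} (ha : 0 < a) (hc : c < 0) :
    ∃! x : ℝ, 0 < x ∧ a * x ^ 2 + b * x + c = 0 := by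
  set s := Real.sqrt (discrim a b c)
  have hb_lt_s : |b| < s := by
    rw [← Real.sqrt_sq_eq_abs]
    exact Real.sqrt_lt_sqrt (sq_nonneg b) (by unfold discrim; nlinarith)
  have hroots (x : ℝ) : a * x ^ 2 + b * x + c = 0 ↔
      x = (-b + s) / (2 * a) ∨ x = (-b - s) / (2 * a) := by
    rw [sq, ← quadratic_eq_zero_iff ha.ne' (by rw [Real.mul_self_sqrt]; unfold discrim; nlinarith)]
  have hplus : 0 < (-b + s) / (2 * a) := div_pos (by linarith [le_abs_self b]) (by positivity)
  have hminus : (-b - s) / (2 * a) < 0 :=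
    div_neg_of_neg_of_pos (by linarith [neg_abs_le b]) (by positivity)
  refine ⟨(-b + s) / (2 * a), ⟨hplus, (hroots _).2 (Or.inl rfl)⟩, ?_⟩
  rintro x ⟨hx, hroot⟩
  rcases (hroots x).1 hroot with rfl | rfl
  · rfl
  · linarith

theorem coexistence_quadratic_roots_general
    (G H μ μv Λv βv : ℝ)
    (hG : 0 < G) (hH : 0 < H) (hμ : 0 < μ) (hμv : 0 < μv)
    (hΛv : 0 < Λv) (hβv : 0 < βv)
    (hHG : H ≤ G) :
    (((Λv / μv) * βv * G / (μ * μv) ≤ 1) →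
      ¬ ∃ x : ℝ, 0 < x ∧
        2 * μv * (G + H + μv) * x^2
          + (μv * μ * (3 * μv + 2 * G) - Λv * βv * (G + H)) * x
          + (μv * μ)^2 * (1 - (Λv / μv) * βv * G / (μ * μv)) = 0) ∧
    ((1 < (Λv / μv) * βv * G / (μ * μv)) →
      ∃! x : ℝ, 0 < x ∧
        2 * μv * (G + H + μv) * x^2
          + (μv * μ * (3 * μv + 2 * G) - Λv * βv * (G + H)) * x
          + (μv * μ)^2 * (1 - (Λv / μv) * βv * G / (μ * μv)) = 0) := by
  set R₀ := (Λv / μv) * βv * G / (μ * μv) with hR₀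
  have hlead : 0 < 2 * μv * (G + H + μv) := by positivity
  refine ⟨fun hR₀_le ↦ ?_, fun hR₀_gt ↦ ?_⟩
  · have hthreshold : Λv * βv * G ≤ μ * μv ^ 2 := by
      rw [hR₀, div_le_one (by positivity), div_mul_eq_mul_div, div_mul_eq_mul_div,
        div_le_iff₀ hμv] at hR₀_le
      linarith
    have hlin : 0 ≤ μv * μ * (3 * μv + 2 * G) - Λv * βv * (G + H) := by
      nlinarith [mul_le_mul_of_nonneg_left hHG (mul_pos hΛv hβv).le,
        mul_pos (mul_pos hμv hμ) hG]
    have hconst : 0 ≤ (μv * μ) ^ 2 * (1 - R₀) := mul_nonneg (sq_nonneg _) (sub_nonneg.2 hR₀_le)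
    rintro ⟨x, hx, hroot⟩
    linarith [mul_pos hlead (pow_pos hx 2), mul_nonneg hlin hx.le]
  · exact existsUnique_pos_root_of_const_neg hlead
      (mul_neg_of_pos_of_neg (by positivity) (sub_neg.2 hR₀_gt))

/-- Positive roots of the quadratic determining the symmetric coexistence equilibrium:
none when `R₀ ≤ 1`, exactly one when `R₀ > 1` (with `R₀ = N_vβ_vG/(μμ_v)`,
`N_v = Λ_v/μ_v`), under `H ≤ G` and `Λ_vβ_v < 2μ_vμ`. -/
theorem coexistence_quadratic_roots
    (G H μ μv Λv βv : ℝ)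
    (hG : 0 < G) (hH : 0 < H) (hμ : 0 < μ) (hμv : 0 < μv)
    (hΛv : 0 < Λv) (hβv : 0 < βv)
    (hHG : H ≤ G) (hsmall : Λv * βv < 2 * μv * μ) :
    (((Λv / μv) * βv * G / (μ * μv) ≤ 1) →
      ¬ ∃ x : ℝ, 0 < x ∧
        2 * μv * (G + H + μv) * x^2
          + (μv * μ * (3 * μv + 2 * G) - Λv * βv * (G + H)) * x
          + (μv * μ)^2 * (1 - (Λv / μv) * βv * G / (μ * μv)) = 0) ∧
    ((1 < (Λv / μv) * βv * G / (μ * μv)) →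
      ∃! x : ℝ, 0 < x ∧
        2 * μv * (G + H + μv) * x^2
          + (μv * μ * (3 * μv + 2 * G) - Λv * βv * (G + H)) * x
          + (μv * μ)^2 * (1 - (Λv / μv) * βv * G / (μ * μv)) = 0) :=
  coexistence_quadratic_roots_general G H μ μv Λv βv hG hH hμ hμv hΛv hβv hHG
end
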